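/- Fix n ≥ 3 and α ∈ (0,1). Let T_n ~ q_{n,α}, let I be uniform on {1,…,n} and independent of T_n, and let Ĩ := max{I,a,b}, where a and b are the smallest leaf labels in the first and second subtrees on the path from leaf I to the root of T_n (b = 0 if only one subtree); Ĩ is the label removed in the down-move of the alpha chain. Then ℙ(Ĩ = ĩ) = (2ĩ − 2 − α)/(n(n − 1 − α)) for every 3 ≤ ĩ ≤ n, and ℙ(Ĩ = 2) = 2(1 − α)/(n(n − 1 − α)). In particular, for α = 1/2, ℙ(Ĩ = ĩ) = (4ĩ − 5)/(n(2n − 3)) for 3 ≤ ĩ ≤ n and ℙ(Ĩ = 2) = 2/(n(2n − 3)). -/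

import Mathlib

open scoped Classical

noncomputable section

/-- The label set `[n] = {1, …, n}`. -/
def lbl (n : ℕ) : Finset ℕ := Finset.Icc 1 n

/-- A rooted binary tree with leaves labeled by the finite set `A ⊆ ℕ`,
encoded as the collection of its edges, where each edge is identified with
the set of leaf labels in the subtree above it. -/
def IsLTree (A : Finset ℕ) (t : Finset (Finset ℕ)) : Prop :=
  (∀ B ∈ t, B ⊆ A ∧ B.Nonempty) ∧
  (∀ j ∈ A, ({j} : Finset ℕ) ∈ t) ∧
  (∀ B₁ ∈ t, ∀ B₂ ∈ t, B₁ ∩ B₂ = ∅ ∨ B₁ ⊆ B₂ ∨ B₂ ⊆ B₁) ∧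
  (∀ B ∈ t, B ≠ A → ∃! B', B' ∈ t ∧ B ∩ B' = ∅ ∧ B ∪ B' ∈ t)

/-- The space `𝕋_A` of rooted binary trees with leaves labeled by `A`. -/
def LTree (A : Finset ℕ) : Type := {t : Finset (Finset ℕ) // IsLTree A t}

noncomputable instance fintypeLTree (A : Finset ℕ) : Fintype (LTree A) := by
  have hfin : {t : Finset (Finset ℕ) | IsLTree A t}.Finite := by
    apply Set.Finite.subset (A.powerset.powerset).finite_toSet
    intro t ht
    have h : IsLTree A t := ht
    simp only [Finset.mem_coe, Finset.mem_powerset]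
    intro B hB
    exact Finset.mem_powerset.mpr (h.1 B hB).1
  exact hfin.fintype

/-- Insertion of a new leaf labeled `j` on the edge `S` of the tree `s`. -/
def insertLeaf (s : Finset (Finset ℕ)) (S : Finset ℕ) (j : ℕ) : Finset (Finset ℕ) :=
  (s.filter fun B => B ∩ S = ∅) ∪ (s.filter fun B => B ⊆ S) ∪
    ((s.filter fun B => S ⊆ B).image fun B => B ∪ {j}) ∪ {({j} : Finset ℕ)}

/-- Ford growth weight of an edge: `α` for internal edges, `1 - α` for external edges. -/
def fordWeight (α : ℝ) (B : Finset ℕ) : ℝ := if 2 ≤ B.card then α else 1 - α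

/-- Modified Ford growth weight: the external edge `{1}` gets weight `α` instead of `1 - α`. -/
def fordWeightT (α : ℝ) (B : Finset ℕ) : ℝ :=
  if 2 ≤ B.card ∨ B = ({1} : Finset ℕ) then α else 1 - α

/-- One step of Ford's alpha growth: probability that a tree with `m` leaves `s`
grows into `t` by insertion of the new leaf `m+1` at an edge chosen with probability
proportional to `1-α` (external) or `α` (internal). -/
def growStepF (α : ℝ) (m : ℕ) (s t : Finset (Finset ℕ)) : ℝ :=
  ∑ S ∈ s, if t = insertLeaf s S (m + 1) then
    fordWeight α S / (∑ S' ∈ s, fordWeight α S') else 0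

/-- One step of the modified Ford alpha growth (edge `{1}` has weight `α`). -/
def growStepFT (α : ℝ) (m : ℕ) (s t : Finset (Finset ℕ)) : ℝ :=
  ∑ S ∈ s, if t = insertLeaf s S (m + 1) then
    fordWeightT α S / (∑ S' ∈ s, fordWeightT α S') else 0

/-- `qF α m` is the law `q_{m,α}` of the `m`-th tree of Ford's alpha growth process. -/
def qF (α : ℝ) : (m : ℕ) → LTree (lbl m) → ℝ
  | 0, _ => 1
  | 1, _ => 1
  | 2, _ => 1
  | (m + 3), t => ∑ s : LTree (lbl (m + 2)), qF α (m + 2) s * growStepF α (m + 2) s.1 t.1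

/-- `qFT α m` is the law `q̃_{m,α}` of the `m`-th tree of the modified Ford alpha
growth process in which the external edge `{1}` is chosen with probability
proportional to `α` rather than `1-α`. -/
def qFT (α : ℝ) : (m : ℕ) → LTree (lbl m) → ℝ
  | 0, _ => 1
  | 1, _ => 1
  | 2, _ => 1
  | (m + 3), t => ∑ s : LTree (lbl (m + 2)), qFT α (m + 2) s * growStepFT α (m + 2) s.1 t.1

/-- Mass of `q_{m,α}` at an arbitrary edge collection (zero on non-trees). -/
def qMass (α : ℝ) (m : ℕ) (u : Finset (Finset ℕ)) : ℝ :=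
  if h : IsLTree (lbl m) u then qF α m ⟨u, h⟩ else 0

/-- Mass of `q̃_{m,α}` at an arbitrary edge collection (zero on non-trees). -/
def qMassT (α : ℝ) (m : ℕ) (u : Finset (Finset ℕ)) : ℝ :=
  if h : IsLTree (lbl m) u then qFT α m ⟨u, h⟩ else 0

/-- Mass of the uniform distribution on `𝕋_{[n]}`. -/
def unifMass (n : ℕ) : ℝ := 1 / (Fintype.card (LTree (lbl n)) : ℝ)

/-- Uniform mass at an arbitrary edge collection (zero on non-trees). -/
def unifTreeMass (c : ℕ) (u : Finset (Finset ℕ)) : ℝ :=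
  if IsLTree (lbl c) u then unifMass c else 0

/-- Smallest label in a finite label set (`0` if empty). -/
def minLbl (B : Finset ℕ) : ℕ := if h : B.Nonempty then B.min' h else 0

/-- The sibling edge of `B` in the tree `t`. -/
def sibling (t : Finset (Finset ℕ)) (B : Finset ℕ) : Finset ℕ :=
  if h : ∃ B', B' ∈ t ∧ B ∩ B' = ∅ ∧ B ∪ B' ∈ t then h.choose else ∅

/-- The parent edge of `B` in the tree `t`. -/
def parentEdge (t : Finset (Finset ℕ)) (B : Finset ℕ) : Finset ℕ := B ∪ sibling t B

/-- `ĩ = max {i, a, b}` where `a`, `b` are the smallest leaf labels in the first two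
subtrees on the ancestral path from leaf `i` to the root of `t ∈ 𝕋_A`
(`b = 0` if the path has only one subtree). -/
def tildeOf (A : Finset ℕ) (t : Finset (Finset ℕ)) (i : ℕ) : ℕ :=
  max i (max (minLbl (sibling t {i}))
    (if parentEdge t {i} = A then 0 else minLbl (sibling t (parentEdge t {i}))))

/-- Swap the leaf labels `i` and `j` in the tree `t`. -/
def swapTree (t : Finset (Finset ℕ)) (i j : ℕ) : Finset (Finset ℕ) :=
  t.image (Finset.image fun x => Equiv.swap i j x)

/-- Delete the leaf labeled `j` from the tree `t` (contracting its parent branch point). -/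
def delLeaf (t : Finset (Finset ℕ)) (j : ℕ) : Finset (Finset ℕ) :=
  (t.image fun B => B.erase j).erase ∅

/-- Down-move of the uniform chain starting from `t ∈ 𝕋_A` with selected leaf `i`:
swap labels `i` and `ĩ = max{i,a,b}` and delete the leaf now labeled `ĩ`. -/
def downUnif (A : Finset ℕ) (t : Finset (Finset ℕ)) (i : ℕ) : Finset (Finset ℕ) :=
  delLeaf (swapTree t i (tildeOf A t i)) (tildeOf A t i)

/-- Relabel all labels `> j` down by one. -/
def relabelGt (j : ℕ) (t : Finset (Finset ℕ)) : Finset (Finset ℕ) :=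
  t.image (Finset.image fun x => if j < x then x - 1 else x)

/-- Down-move of the alpha chain: after removing the leaf labeled `ĩ`, relabel the
leaves `ĩ+1, …, n` by `ĩ, …, n-1`. -/
def downAlpha (A : Finset ℕ) (t : Finset (Finset ℕ)) (i : ℕ) : Finset (Finset ℕ) :=
  relabelGt (tildeOf A t i) (downUnif A t i)

/-- Transition matrix of the uniform chain on `𝕋_{[n]}` (Definition 1.1):
uniform leaf selection, label-swapped deletion, uniform edge re-insertion of `ĩ`. -/
def PUnif (n : ℕ) (t t' : LTree (lbl n)) : ℝ :=
  (1 / (n : ℝ)) * ∑ i ∈ lbl n,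
    (1 / ((downUnif (lbl n) t.1 i).card : ℝ)) *
      ∑ S ∈ downUnif (lbl n) t.1 i,
        (if t'.1 = insertLeaf (downUnif (lbl n) t.1 i) S (tildeOf (lbl n) t.1 i) then 1 else 0)

/-- Transition matrix of the alpha chain on `𝕋_{[n]}` (Definition 2.4):
uniform leaf selection, label-swapped deletion with relabeling, and insertion of a new
leaf labeled `n` according to the alpha growth rule. -/
def PAlpha (α : ℝ) (n : ℕ) (t t' : LTree (lbl n)) : ℝ :=
  (1 / (n : ℝ)) * ∑ i ∈ lbl n, growStepF α (n - 1) (downAlpha (lbl n) t.1 i) t'.1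

/-- `t ∩ A`: the subtree of `t` spanned by the labels in `A`, reduced. -/
def restrictT (t : Finset (Finset ℕ)) (A : Finset ℕ) : Finset (Finset ℕ) :=
  (t.image fun B => B ∩ A).erase ∅

/-- The most recent ancestor edge of leaf `j` in `t` (including `{j}` itself)
that intersects the label set `A`. -/
def ancEdgeA (t : Finset (Finset ℕ)) (A : Finset ℕ) (j : ℕ) : Finset ℕ :=
  if h : (t.filter fun C => j ∈ C ∧ (C ∩ A).Nonempty).Nonempty then
    (t.filter fun C => j ∈ C ∧ (C ∩ A).Nonempty).inf' h id
  else ∅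

/-- The projection `π` sending a leaf `j` of `t` to an edge of `t ∩ A`. -/
def piProjA (t : Finset (Finset ℕ)) (A : Finset ℕ) (j : ℕ) : Finset ℕ := ancEdgeA t A j ∩ A

/-- Decorated trees: a tree shape together with a mass assignment on edges
(extended by zero off the shape). -/
abbrev DecoT : Type := Finset (Finset ℕ) × (Finset ℕ → ℕ)

/-- The decorated tree `ρ_A^{•(n)}(t)`: the reduced subtree `t ∩ A` with each edge
carrying the number of leaves of `t` projecting to it. -/
def rhoDecoA (n : ℕ) (A : Finset ℕ) (t : Finset (Finset ℕ)) : DecoT :=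
  (restrictT t A, fun B => ((lbl n).filter fun j => piProjA t A j = B).card)

/-- The decorated `k`-tree `ρ_k^{•(n)}(t)`. -/
def rhoDeco (n k : ℕ) (t : Finset (Finset ℕ)) : DecoT := rhoDecoA n (lbl k) t

/-- Collapsed trees: a tree shape together with a label-set assignment on edges. -/
abbrev StarT : Type := Finset (Finset ℕ) × (Finset ℕ → Finset ℕ)

/-- The collapsed `n`-tree with `k` leaves `ρ_k^{⋆(n)}(t)`. -/
def rhoStar (n k : ℕ) (t : Finset (Finset ℕ)) : StarT :=
  (restrictT t (lbl k), fun B => (lbl n).filter fun j => piProjA t (lbl k) j = B)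

/-- Replace each label set of a collapsed tree by its cardinality. -/
def starToDeco (ts : StarT) : DecoT := (ts.1, fun B => (ts.2 B).card)

/-- Membership in `𝕋_{[k]}^{•(n)}`: decorated `k`-trees with total mass `n`,
external masses at least 1, and mass vanishing off the shape. -/
def IsDeco (k n : ℕ) (d : DecoT) : Prop :=
  IsLTree (lbl k) d.1 ∧ (∀ B, B ∉ d.1 → d.2 B = 0) ∧ (∑ B ∈ d.1, d.2 B) = n ∧
    ∀ j ∈ lbl k, 1 ≤ d.2 {j}

/-- Edge mass of `ρ_k^{•(n)}(t)`. -/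
def massOf (n k : ℕ) (t : Finset (Finset ℕ)) (B : Finset ℕ) : ℕ := (rhoDeco n k t).2 B

/-- The urn counts of the decorated `k`-tree of `t`:
`x_i - 1` on external edges and `y_B` on internal edges. -/
def urnOf (n k : ℕ) (t : Finset (Finset ℕ)) : Finset ℕ → ℕ :=
  fun B => if B.card ≤ 1 then massOf n k t B - 1 else massOf n k t B

/-- Rising factorial `a^{(j)} = a (a+1) ⋯ (a+j-1)`. -/
def risingFac (a : ℝ) : ℕ → ℝ
  | 0 => 1
  | (j + 1) => risingFac a j * (a + j)

/-- Dirichlet-multinomial distribution `DM^β₃(m)` on triples summing to `m`, with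
parameters `(1-β, 1-β, β)`. -/
def dm3 (β : ℝ) (m j1 j2 j3 : ℕ) : ℝ :=
  if j1 + j2 + j3 = m then
    ((m.factorial : ℝ) / ((j1.factorial : ℝ) * (j2.factorial : ℝ) * (j3.factorial : ℝ))) *
      (risingFac (1 - β) j1 * risingFac (1 - β) j2 * risingFac β j3) / risingFac (2 - β) m
  else 0

/-- The decrement matrix `δ_α(N : m)` of the `(α,α)` regenerative composition. -/
def deltaAlpha (α : ℝ) (N m : ℕ) : ℝ :=
  α * (N.choose m : ℝ) * Real.Gamma ((m : ℝ) - α) * Real.Gamma ((N : ℝ) - (m : ℝ) + α) /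
    (Real.Gamma (1 - α) * Real.Gamma ((N : ℝ) + α))

/-- `δ(N : m) = δ_{1/2}(N : m)` in its binomial-coefficient form. -/
def deltaHalf (N m : ℕ) : ℝ :=
  (1 / (2 * (m : ℝ) - 1)) * (((2 * m).choose m : ℝ) *
    (((2 * N - 2 * m).choose (N - m)) : ℝ) / (((2 * N).choose N) : ℝ))

/-- Increase the mass of edge `C` by one. -/
def bumpD (d : DecoT) (C : Finset ℕ) : DecoT :=
  (d.1, fun B => if B = C then d.2 B + 1 else d.2 B)

/-- Decrease the mass of edge `C` by one. -/
def dropD (d : DecoT) (C : Finset ℕ) : DecoT :=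
  (d.1, fun B => if B = C then d.2 B - 1 else d.2 B)

/-- Up-move on decorated trees of total mass `m`: choose an edge with probability
`(x_j - α)/(m - α)` (external) or `(y_B + α)/(m - α)` (internal) and increase its
mass by one. -/
def upProb (α : ℝ) (m : ℕ) (d d' : DecoT) : ℝ :=
  ∑ C ∈ d.1,
    ((if 2 ≤ C.card then (d.2 C : ℝ) + α else (d.2 C : ℝ) - α) / ((m : ℝ) - α)) *
      (if d' = bumpD d C then 1 else 0)

/-- Case (B) mass reshuffle: set the mass of external edge `B` to `m` and reduce the
mass of its parent by `m`. -/
def caseBD (d : DecoT) (B : Finset ℕ) (m : ℕ) : DecoT :=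
  (d.1, fun C => if C = B then m else if C = parentEdge d.1 B then d.2 C - m else d.2 C)

/-- Restrict a mass function to a shape (zero off the shape). -/
def restrictF (s : Finset (Finset ℕ)) (f : Finset ℕ → ℕ) : Finset ℕ → ℕ :=
  fun B => if B ∈ s then f B else 0

/-- Insert leaf `j` on the external edge `{c}` of the decorated tree `(s, f)`, splitting
the mass of `{c}` as `x_c := j1+1`, `x_j := j2+1`, `y_{{c,j}} := j3`. -/
def insDecoExt (s : Finset (Finset ℕ)) (f : Finset ℕ → ℕ) (c j j1 j2 j3 : ℕ) : DecoT :=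
  (insertLeaf s {c} j,
    restrictF (insertLeaf s {c} j) fun B =>
      if B = ({c} : Finset ℕ) then j1 + 1 else if B = ({j} : Finset ℕ) then j2 + 1
      else if B = ({c, j} : Finset ℕ) then j3
      else if j ∈ B then f (B.erase j) else f B)

/-- Insert leaf `j` on the internal edge `C` of the decorated tree `(s, f)`, splitting
the mass of `C` as `y_{C∪{j}} := j1`, `y_C := j2`, `x_j := j3+1`. -/
def insDecoInt (s : Finset (Finset ℕ)) (f : Finset ℕ → ℕ) (C : Finset ℕ)
    (j j1 j2 j3 : ℕ) : DecoT :=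
  (insertLeaf s C j,
    restrictF (insertLeaf s C j) fun B =>
      if B = C ∪ {j} then j1 else if B = C then j2 else if B = ({j} : Finset ℕ) then j3 + 1
      else if j ∈ B then f (B.erase j) else f B)

/-- Inserting the label `j` into a decorated tree (Definition 4.2), with edge-selection
normalizer `M`: an external edge `{i}` is selected with probability `(x_i - 1)/M` and
its mass split via `DM^α₃(x_i - 2)`; an internal edge `B` is selected with probability
`y_B/M` and its mass split via `DM^{1-α}₃(y_B - 1)`. -/
def insProb (α : ℝ) (M : ℕ) (j : ℕ) (d d' : DecoT) : ℝ :=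
  ∑ C ∈ d.1,
    if 2 ≤ C.card then
      ((d.2 C : ℝ) / (M : ℝ)) *
        ∑ a ∈ Finset.range (d.2 C), ∑ b ∈ Finset.range (d.2 C),
          dm3 (1 - α) (d.2 C - 1) a b (d.2 C - 1 - a - b) *
            (if d' = insDecoInt d.1 d.2 C j a b (d.2 C - 1 - a - b) then 1 else 0)
    else
      (((d.2 C : ℝ) - 1) / (M : ℝ)) *
        ∑ a ∈ Finset.range (d.2 C), ∑ b ∈ Finset.range (d.2 C),
          dm3 α (d.2 C - 2) a b (d.2 C - 2 - a - b) *
            (if d' = insDecoExt d.1 d.2 (minLbl C) j a b (d.2 C - 2 - a - b) then 1 else 0)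

/-- Steps (iii)-(v) of resampling the label `i` (Definition 4.4) into a decorated tree of
total mass `n-1` (`n` being the total mass before the drop): choose an edge with
probability `(x_j - 1/2)/(n - 3/2)` (external) or `(y_B + 1/2)/(n - 3/2)` (internal) and
insert leaf `i` there, splitting the increased mass via `DM^{1/2}₃`. -/
def resampProb (n : ℕ) (i : ℕ) (d d' : DecoT) : ℝ :=
  ∑ C ∈ d.1,
    if 2 ≤ C.card then
      (((d.2 C : ℝ) + 1 / 2) / ((n : ℝ) - 3 / 2)) *
        ∑ a ∈ Finset.range (d.2 C + 1), ∑ b ∈ Finset.range (d.2 C + 1),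
          dm3 (1 / 2) (d.2 C) a b (d.2 C - a - b) *
            (if d' = insDecoInt d.1 d.2 C i a b (d.2 C - a - b) then 1 else 0)
    else
      (((d.2 C : ℝ) - 1 / 2) / ((n : ℝ) - 3 / 2)) *
        ∑ a ∈ Finset.range (d.2 C), ∑ b ∈ Finset.range (d.2 C),
          dm3 (1 / 2) (d.2 C - 1) a b (d.2 C - 1 - a - b) *
            (if d' = insDecoExt d.1 d.2 (minLbl C) i a b (d.2 C - 1 - a - b) then 1 else 0)

/-- Swap labels `i` and `j` in a decorated tree. -/
def swapD (d : DecoT) (i j : ℕ) : DecoT :=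
  (d.1.image (Finset.image fun x => Equiv.swap i j x),
    fun C => d.2 (C.image fun x => Equiv.swap i j x))

/-- Case (C) of the uniform decorated chain: swap `i = min B` with `ĩ`, delete leaf `ĩ`
(with its mass 1 and parent mass 0) and resample `ĩ`. -/
def caseCUnif (n k : ℕ) (d : DecoT) (B : Finset ℕ) (d' : DecoT) : ℝ :=
  resampProb n (tildeOf (lbl k) d.1 (minLbl B))
    (delLeaf (swapD d (minLbl B) (tildeOf (lbl k) d.1 (minLbl B))).1
        (tildeOf (lbl k) d.1 (minLbl B)),
      restrictF (delLeaf (swapD d (minLbl B) (tildeOf (lbl k) d.1 (minLbl B))).1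
          (tildeOf (lbl k) d.1 (minLbl B)))
        fun C => (swapD d (minLbl B) (tildeOf (lbl k) d.1 (minLbl B))).2 C +
          (swapD d (minLbl B) (tildeOf (lbl k) d.1 (minLbl B))).2
            (C ∪ {tildeOf (lbl k) d.1 (minLbl B)}))
    d'

/-- Transition matrix of the uniform decorated chain on `𝕋_{[k]}^{•(n)}`
(Definition 4.6). -/
def RUnif (n k : ℕ) (d d' : DecoT) : ℝ :=
  ∑ B ∈ d.1,
    ((d.2 B : ℝ) / (n : ℝ)) *
      (if 2 ≤ B.card ∨ 2 ≤ d.2 B then upProb (1 / 2) (n - 1) (dropD d B) d'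
       else if 0 < d.2 (parentEdge d.1 B) then
         ∑ m ∈ Finset.Icc 1 (d.2 (parentEdge d.1 B)),
           deltaHalf (d.2 (parentEdge d.1 B)) m * upProb (1 / 2) (n - 1) (caseBD d B m) d'
       else caseCUnif n k d B d')

/-- Insertion of label `j` followed by an up-move (used in case (C) of the alpha
decorated chain). -/
def insThenUp (α : ℝ) (n k j : ℕ) (d : DecoT) (d' : DecoT) : ℝ :=
  ∑ C ∈ d.1,
    if 2 ≤ C.card then
      ((d.2 C : ℝ) / ((n : ℝ) - (k : ℝ))) *
        ∑ a ∈ Finset.range (d.2 C), ∑ b ∈ Finset.range (d.2 C),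
          dm3 (1 - α) (d.2 C - 1) a b (d.2 C - 1 - a - b) *
            upProb α (n - 1) (insDecoInt d.1 d.2 C j a b (d.2 C - 1 - a - b)) d'
    else
      (((d.2 C : ℝ) - 1) / ((n : ℝ) - (k : ℝ))) *
        ∑ a ∈ Finset.range (d.2 C), ∑ b ∈ Finset.range (d.2 C),
          dm3 α (d.2 C - 2) a b (d.2 C - 2 - a - b) *
            upProb α (n - 1) (insDecoExt d.1 d.2 (minLbl C) j a b (d.2 C - 2 - a - b)) d'

/-- Dropping the label `it` from a decorated tree (Definition 4.1): delete leaf `it`,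
discard its mass and its parent's mass, and relabel the labels `> it` down by one. -/
def dropLabelD (d : DecoT) (it : ℕ) : DecoT :=
  ((delLeaf d.1 it).image (Finset.image fun x => if it < x then x - 1 else x),
    restrictF ((delLeaf d.1 it).image (Finset.image fun x => if it < x then x - 1 else x))
      fun C =>
        restrictF (delLeaf d.1 it) (fun C' => d.2 C' + d.2 (C' ∪ {it}))
          (C.image fun x => if it ≤ x then x + 1 else x))

/-- Case (C) of the alpha decorated chain: swap, drop the label `ĩ` (with relabeling),
insert the label `k` and perform an up-move. -/
def caseCAlpha (α : ℝ) (n k : ℕ) (d : DecoT) (B : Finset ℕ) (d' : DecoT) : ℝ :=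
  insThenUp α n k k
    (dropLabelD (swapD d (minLbl B) (tildeOf (lbl k) d.1 (minLbl B)))
      (tildeOf (lbl k) d.1 (minLbl B))) d'

/-- Transition matrix of the alpha decorated chain on `𝕋_{[k]}^{•(n)}`
(Definition 4.7). -/
def RAlpha (α : ℝ) (n k : ℕ) (d d' : DecoT) : ℝ :=
  ∑ B ∈ d.1,
    ((d.2 B : ℝ) / (n : ℝ)) *
      (if 2 ≤ B.card ∨ 2 ≤ d.2 B then upProb α (n - 1) (dropD d B) d'
       else if 0 < d.2 (parentEdge d.1 B) then
         ∑ m ∈ Finset.Icc 1 (d.2 (parentEdge d.1 B)),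
           deltaAlpha α (d.2 (parentEdge d.1 B)) m * upProb α (n - 1) (caseBD d B m) d'
       else caseCAlpha α n k d B d')

/-- The sub-probability transition matrix of the alpha decorated chain restricted to
moves that do not use case (C). -/
def RAlphaNoC (α : ℝ) (n k : ℕ) (d d' : DecoT) : ℝ :=
  ∑ B ∈ d.1,
    ((d.2 B : ℝ) / (n : ℝ)) *
      (if 2 ≤ B.card ∨ 2 ≤ d.2 B then upProb α (n - 1) (dropD d B) d'
       else if 0 < d.2 (parentEdge d.1 B) then
         ∑ m ∈ Finset.Icc 1 (d.2 (parentEdge d.1 B)),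
           deltaAlpha α (d.2 (parentEdge d.1 B)) m * upProb α (n - 1) (caseBD d B m) d'
       else 0)

/-- Probability that the next transition of the alpha decorated chain uses case (C)
and drops the label `it`. -/
def probDropC (n k : ℕ) (d : DecoT) (it : ℕ) : ℝ :=
  ∑ B ∈ d.1,
    if ¬(2 ≤ B.card ∨ 2 ≤ d.2 B) ∧ d.2 (parentEdge d.1 B) = 0 ∧
        tildeOf (lbl k) d.1 (minLbl B) = it then (d.2 B : ℝ) / (n : ℝ)
    else 0

/-- Rank (1-based) of `a` within the finite label set `A`. -/
def rankIn (A : Finset ℕ) (a : ℕ) : ℕ := (A.filter fun x => x ≤ a).card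

/-- Relabel the labels appearing in `u` by their ranks within `A`. -/
def relabelRank (A : Finset ℕ) (u : Finset (Finset ℕ)) : Finset (Finset ℕ) :=
  u.image (Finset.image (rankIn A))

/-- The label set `π^{-1}(B)` of leaves of `t` projecting to the edge `B` of `t ∩ [k]`. -/
def preimLbl (n k : ℕ) (t : Finset (Finset ℕ)) (B : Finset ℕ) : Finset ℕ :=
  (lbl n).filter fun j => piProjA t (lbl k) j = B

/-- The lowest edge of `t` mapping onto the edge `B` of `t ∩ [k]`. -/
def bottomEdge (k : ℕ) (t : Finset (Finset ℕ)) (B : Finset ℕ) : Finset ℕ :=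
  if h : (t.filter fun C => C ∩ lbl k = B).Nonempty then
    (t.filter fun C => C ∩ lbl k = B).inf' h id
  else ∅

/-- The internal structure `int(V_B)` of `ρ_k^{•(n)}(t)` supported on the edge `B` of
`t ∩ [k]`: the subtree of `t` collapsing to `B`, with the vertex corresponding to `B`
turned into a leaf labeled `1` if `B` is internal, all leaves relabeled by ranks. -/
def intStruct (n k : ℕ) (t : Finset (Finset ℕ)) (B : Finset ℕ) : Finset (Finset ℕ) :=
  if 2 ≤ B.card then
    relabelRank (insert 0 (preimLbl n k t B))
      ((t.image fun C =>
        (C ∩ preimLbl n k t B) ∪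
          (if (C ∩ bottomEdge k t B).Nonempty then ({0} : Finset ℕ) else ∅)).erase ∅)
  else
    relabelRank (preimLbl n k t B) ((t.image fun C => C ∩ preimLbl n k t B).erase ∅)

/-- The kernel `Λ(𝐭⋆, ·) = q_{n,1/2}( · ∣ ρ_k^{⋆(n)} = 𝐭⋆)`. -/
def LamStar (n k : ℕ) (ts : StarT) (t : LTree (lbl n)) : ℝ :=
  (unifMass n * (if rhoStar n k t.1 = ts then 1 else 0)) /
    (∑ t' : LTree (lbl n), unifMass n * (if rhoStar n k t'.1 = ts then 1 else 0))

/-- The induced transition matrix `K = Λ P ρ_k^{⋆(n)}` on collapsed trees. -/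
def KColl (n k : ℕ) (ts ts' : StarT) : ℝ :=
  ∑ t : LTree (lbl n), LamStar n k ts t *
    (∑ t'' : LTree (lbl n), PUnif n t t'' * (if rhoStar n k t''.1 = ts' then 1 else 0))

/-- The set `𝕋_{[k]}^{⋆(n)}` of collapsed `n`-trees with `k` leaves. -/
def allStar (n k : ℕ) : Finset StarT :=
  (Finset.univ : Finset (LTree (lbl n))).image fun t => rhoStar n k t.1

/-- The set `𝕋_{[k]}^{•(n)}` of decorated `k`-trees arising from `n`-trees. -/
def allDeco (n k : ℕ) : Finset DecoT :=
  (Finset.univ : Finset (LTree (lbl n))).image fun t => rhoDeco n k t.1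

/-- The kernel `Λ^{(α)}(𝐭•, ·) = q_{n,α}( · ∣ ρ_k^{•(n)} = 𝐭•)`. -/
def LamDeco (α : ℝ) (n k : ℕ) (d : DecoT) (t : LTree (lbl n)) : ℝ :=
  (qF α n t * (if rhoDeco n k t.1 = d then 1 else 0)) /
    (∑ t' : LTree (lbl n), qF α n t' * (if rhoDeco n k t'.1 = d then 1 else 0))

/-- Update rule of the generalized Pólya urn. -/
def bumpF (c : Finset ℕ → ℕ) (B : Finset ℕ) : Finset ℕ → ℕ :=
  fun C => if C = B then c C + 1 else c C

/-- One step of the generalized Pólya urn with colors the edges of `s`, in which color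
`B` is selected with probability proportional to `(1-α) + c B` (external) or
`α + c B` (internal). -/
def urnStep (α : ℝ) (s : Finset (Finset ℕ)) (c c' : Finset ℕ → ℕ) : ℝ :=
  ∑ B ∈ s, ((fordWeight α B + (c B : ℝ)) / (∑ B' ∈ s, (fordWeight α B' + (c B' : ℝ)))) *
    (if c' = bumpF c B then 1 else 0)

end
open Finset

/-!
Let `F_m(ĩ)` be the expected number of leaves `i` of `T_m` with `Ĩ = ĩ`; the probability in
question is `F_n(ĩ) / n`. When the leaf `m + 1` is inserted on the edge `S`, its own `ĩ` is
`m + 1`, while the `ĩ` of an old leaf `i` becomes `m + 1` if `S` is the leaf edge of `i` or its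
parent edge, and is unchanged otherwise. These two edges carry weight `(1 - α) + α = 1` out of
the total weight `m - α` (split a tree at its root to compute the total), so
`(m - α) F_{m+1}(ĩ) = (m - 1 - α) F_m(ĩ) + (2m - α) [ĩ = m + 1]`.
Hence `(m - 1 - α) F_m(ĩ)` is constant in `m ≥ ĩ`: it equals `2ĩ - 2 - α`, acquired at
`m = ĩ`, for `ĩ ≥ 3`, and `2(1 - α)` for `ĩ = 2`, because both leaves of `T_2` have `Ĩ = 2`.
-/

def IsSibling (t : Finset (Finset ℕ)) (B B' : Finset ℕ) : Prop :=
  B' ∈ t ∧ B ∩ B' = ∅ ∧ B ∪ B' ∈ t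

theorem isSibling_unique_of_laminar {t : Finset (Finset ℕ)} (hne : ∀ B ∈ t, B.Nonempty)
    (hlam : ∀ B₁ ∈ t, ∀ B₂ ∈ t, B₁ ∩ B₂ = ∅ ∨ B₁ ⊆ B₂ ∨ B₂ ⊆ B₁)
    {B C D : Finset ℕ} (hB : B.Nonempty) (hC : IsSibling t B C) (hD : IsSibling t B D) :
    C = D := by
  wlog hCD : B ∪ C ⊆ B ∪ D generalizing C D
  · obtain ⟨b, hb⟩ := hB
    rcases hlam _ hC.2.2 _ hD.2.2 with h | h | h
    · simpa [hb] using Finset.ext_iff.mp h b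
    · exact absurd h hCD
    · exact (this hD hC h).symm
  obtain ⟨hCt, hBC, hBCt⟩ := hC
  obtain ⟨hDt, hBD, -⟩ := hD
  rw [← disjoint_iff_inter_eq_empty] at hBC hBD
  have hCD' : C ⊆ D := fun x hx =>
    (mem_union.mp (hCD (mem_union_right B hx))).resolve_left (disjoint_right.mp hBC hx)
  obtain ⟨b, hb⟩ := hB
  obtain ⟨c, hc⟩ := hne C hCt
  rcases hlam D hDt (B ∪ C) hBCt with h | h | h
  · simpa [h] using mem_inter_of_mem (hCD' hc) (mem_union_right B hc)
  · exact Subset.antisymm hCD' fun x hx =>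
      (mem_union.mp (h hx)).resolve_left (disjoint_right.mp hBD hx)
  · exact absurd (h (mem_union_left C hb)) (disjoint_left.mp hBD hb)

namespace IsLTree

variable {A : Finset ℕ} {t : Finset (Finset ℕ)} {B C D : Finset ℕ}

theorem subset_of_mem (ht : IsLTree A t) (hB : B ∈ t) : B ⊆ A := (ht.1 B hB).1

theorem nonempty_of_mem (ht : IsLTree A t) (hB : B ∈ t) : B.Nonempty := (ht.1 B hB).2

theorem singleton_mem (ht : IsLTree A t) {j : ℕ} (hj : j ∈ A) : ({j} : Finset ℕ) ∈ t :=
  ht.2.1 j hj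

theorem subset_or_subset (ht : IsLTree A t) (hB : B ∈ t) (hC : C ∈ t) {x : ℕ} (hxB : x ∈ B)
    (hxC : x ∈ C) : B ⊆ C ∨ C ⊆ B :=
  (ht.2.2.1 B hB C hC).resolve_left fun h => by
    simpa [h] using mem_inter_of_mem hxB hxC

theorem of_exists_isSibling (h₁ : ∀ B ∈ t, B ⊆ A ∧ B.Nonempty)
    (h₂ : ∀ j ∈ A, ({j} : Finset ℕ) ∈ t)
    (h₃ : ∀ B₁ ∈ t, ∀ B₂ ∈ t, B₁ ∩ B₂ = ∅ ∨ B₁ ⊆ B₂ ∨ B₂ ⊆ B₁)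
    (h₄ : ∀ B ∈ t, B ≠ A → ∃ B', IsSibling t B B') : IsLTree A t := by
  refine ⟨h₁, h₂, h₃, fun B hB hBA => ?_⟩
  obtain ⟨C, hC⟩ := h₄ B hB hBA
  exact ⟨C, hC, fun D hD =>
    isSibling_unique_of_laminar (fun X hX => (h₁ X hX).2) h₃ (h₁ B hB).2 hD hC⟩

theorem sibling_eq (ht : IsLTree A t) (hB : B ∈ t) (hC : IsSibling t B C) :
    sibling t B = C := by
  have h : ∃ B', B' ∈ t ∧ B ∩ B' = ∅ ∧ B ∪ B' ∈ t := ⟨C, hC⟩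
  rw [sibling, dif_pos h]
  exact isSibling_unique_of_laminar (fun X hX => ht.nonempty_of_mem hX) ht.2.2.1
    (ht.nonempty_of_mem hB) h.choose_spec hC

theorem isSibling_sibling (ht : IsLTree A t) (hB : B ∈ t) (hBA : B ≠ A) :
    IsSibling t B (sibling t B) := by
  obtain ⟨C, hC, -⟩ := ht.2.2.2 B hB hBA
  rwa [ht.sibling_eq hB hC]

theorem sibling_subset (ht : IsLTree A t) (B : Finset ℕ) : sibling t B ⊆ A := by
  unfold sibling
  split_ifs with h
  · exact ht.subset_of_mem h.choose_spec.1
  · exact empty_subset A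

theorem ssubset_union_of_isSibling (ht : IsLTree A t) (h : IsSibling t B C) : B ⊂ B ∪ C := by
  obtain ⟨c, hc⟩ := ht.nonempty_of_mem h.1
  refine Finset.ssubset_iff_subset_ne.mpr ⟨subset_union_left, fun hBC => ?_⟩
  have : c ∈ B ∩ C := mem_inter_of_mem (hBC ▸ mem_union_right B hc) hc
  simp [h.2.1] at this

theorem root_mem (ht : IsLTree A t) (hA : A.Nonempty) : A ∈ t := by
  obtain ⟨a, ha⟩ := hA
  obtain ⟨M, hMt, hMmax⟩ := t.exists_maximal ⟨{a}, ht.singleton_mem ha⟩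
  by_contra hAt
  have hsib := ht.isSibling_sibling hMt (ne_of_mem_of_not_mem hMt hAt)
  exact (ht.ssubset_union_of_isSibling hsib).2 (hMmax hsib.2.2 subset_union_left)

theorem union_subset_of_ssubset (ht : IsLTree A t) (hD : D ∈ t) (hDC : IsSibling t D C)
    (hB : B ∈ t) (hDB : D ⊂ B) : D ∪ C ⊆ B := by
  obtain ⟨d, hd⟩ := ht.nonempty_of_mem hD
  refine (ht.subset_or_subset hDC.2.2 hB (mem_union_left C hd) (hDB.subset hd)).elim
    id fun hBDC => ?_
  obtain ⟨x, hxB, hxD⟩ := exists_of_ssubset hDB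
  have hxC : x ∈ C := (mem_union.mp (hBDC hxB)).resolve_left hxD
  refine (ht.subset_or_subset hDC.1 hB hxC hxB).elim (union_subset hDB.subset)
    fun hBC => ?_
  have : d ∈ D ∩ C := mem_inter_of_mem hd (hBC (hDB.subset hd))
  simp [hDC.2.1] at this

theorem subtree (ht : IsLTree A t) (hB : B ∈ t) : IsLTree B (t.filter (· ⊆ B)) := by
  refine of_exists_isSibling (fun D hD => ?_) (fun j hj => ?_) (fun D₁ h₁ D₂ h₂ => ?_)
    (fun D hD hDB => ?_)
  · exact ⟨(mem_filter.mp hD).2, ht.nonempty_of_mem (mem_filter.mp hD).1⟩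
  · exact mem_filter.mpr ⟨ht.singleton_mem (ht.subset_of_mem hB hj),
      singleton_subset_iff.mpr hj⟩
  · exact ht.2.2.1 D₁ (mem_filter.mp h₁).1 D₂ (mem_filter.mp h₂).1
  · obtain ⟨hDt, hDsub⟩ := mem_filter.mp hD
    have hDB' : D ⊂ B := Finset.ssubset_iff_subset_ne.mpr ⟨hDsub, hDB⟩
    have hDA : D ≠ A := fun h => hDB'.ne (Subset.antisymm hDsub (h ▸ ht.subset_of_mem hB))
    have hsib := ht.isSibling_sibling hDt hDA
    have hpar := ht.union_subset_of_ssubset hDt hsib hB hDB'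
    exact ⟨sibling t D, mem_filter.mpr ⟨hsib.1, subset_union_right.trans hpar⟩,
      hsib.2.1, mem_filter.mpr ⟨hsib.2.2, hpar⟩⟩

theorem isSibling_symm (hB : B ∈ t) (h : IsSibling t B C) : IsSibling t C B :=
  ⟨hB, by rw [inter_comm, h.2.1], by rw [union_comm]; exact h.2.2⟩

theorem exists_isSibling_union_eq (ht : IsLTree A t) (hA : 2 ≤ #A) :
    ∃ B C, B ∈ t ∧ IsSibling t B C ∧ B ∪ C = A := by
  obtain ⟨a, ha⟩ : A.Nonempty := card_pos.mp (by omega)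
  have haA : ({a} : Finset ℕ) ⊂ A :=
    Finset.ssubset_iff_subset_ne.mpr
      ⟨singleton_subset_iff.mpr ha, fun h => by simp [← h] at hA⟩
  obtain ⟨M, hM, hMmax⟩ :=
    (t.filter (· ⊂ A)).exists_maximal ⟨{a}, mem_filter.mpr ⟨ht.singleton_mem ha, haA⟩⟩
  obtain ⟨hMt, hMA⟩ := mem_filter.mp hM
  have hsib := ht.isSibling_sibling hMt hMA.ne
  refine ⟨M, _, hMt, hsib, ?_⟩
  have hsub := ht.union_subset_of_ssubset hMt hsib (ht.root_mem ⟨a, ha⟩) hMA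
  by_contra hne
  exact (ht.ssubset_union_of_isSibling hsib).2 (hMmax (mem_filter.mpr
    ⟨hsib.2.2, Finset.ssubset_iff_subset_ne.mpr ⟨hsub, hne⟩⟩) subset_union_left)

theorem eq_or_subset_of_isSibling_union_eq (ht : IsLTree A t) (hB : B ∈ t)
    (hBC : IsSibling t B C) (hA : B ∪ C = A) (hD : D ∈ t) : D = A ∨ D ⊆ B ∨ D ⊆ C := by
  have key : ∀ {X Y}, X ∈ t → IsSibling t X Y → X ∪ Y = A → ∀ {x}, x ∈ X →
      x ∈ D → D = A ∨ D ⊆ X := fun {X Y} hX hXY hXYA {x} hxX hxD => by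
    rcases ht.subset_or_subset hD hX hxD hxX with hDX | hXD
    · exact Or.inr hDX
    rcases hXD.eq_or_ssubset with rfl | hXD
    · exact Or.inr subset_rfl
    · exact Or.inl (Subset.antisymm (ht.subset_of_mem hD)
        (hXYA ▸ ht.union_subset_of_ssubset hX hXY hD hXD))
  obtain ⟨d, hd⟩ := ht.nonempty_of_mem hD
  rcases mem_union.mp (hA ▸ ht.subset_of_mem hD hd : d ∈ B ∪ C) with hdB | hdC
  · exact (key hB hBC hA hdB hd).imp_right Or.inl
  · exact (key hBC.1 (isSibling_symm hB hBC) (by rw [union_comm, hA]) hdC hd).imp_right Or.inr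

theorem sum_eq_add_sum_subtree (ht : IsLTree A t) (hB : B ∈ t) (hBC : IsSibling t B C)
    (hA : B ∪ C = A) (f : Finset ℕ → ℝ) :
    ∑ S ∈ t, f S =
      f A + (∑ S ∈ t.filter (· ⊆ B), f S + ∑ S ∈ t.filter (· ⊆ C), f S) := by
  have hBA : B ⊂ A := hA ▸ ht.ssubset_union_of_isSibling hBC
  have hCA : C ⊂ A :=
    hA ▸ union_comm C B ▸ ht.ssubset_union_of_isSibling (isSibling_symm hB hBC)
  have hsplit : t = insert A (t.filter (· ⊆ B) ∪ t.filter (· ⊆ C)) := by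
    ext D
    simp only [mem_insert, mem_union, mem_filter]
    constructor
    · intro hD
      exact (ht.eq_or_subset_of_isSibling_union_eq hB hBC hA hD).imp_right
        (Or.imp (⟨hD, ·⟩) (⟨hD, ·⟩))
    · rintro (rfl | ⟨hD, -⟩ | ⟨hD, -⟩)
      exacts [ht.root_mem ((ht.nonempty_of_mem hB).mono hBA.subset), hD, hD]
  have hAnot : A ∉ t.filter (· ⊆ B) ∪ t.filter (· ⊆ C) := by
    simp only [mem_union, mem_filter, not_or, not_and]
    exact ⟨fun _ => not_subset_of_ssubset hBA, fun _ => not_subset_of_ssubset hCA⟩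
  have hdisj : Disjoint (t.filter (· ⊆ B)) (t.filter (· ⊆ C)) := by
    refine disjoint_filter.mpr fun D hD hDB hDC => ?_
    obtain ⟨d, hd⟩ := ht.nonempty_of_mem hD
    simpa [hBC.2.1] using mem_inter_of_mem (hDB hd) (hDC hd)
  rw [← sum_union hdisj, ← sum_insert hAnot, ← hsplit]

theorem sum_fordWeight (α : ℝ) (ht : IsLTree A t) (hA : A.Nonempty) :
    ∑ S ∈ t, fordWeight α S = #A - α := by
  induction A using Finset.strongInduction generalizing t with
  | H A ih =>
  rcases lt_or_ge #A 2 with hA1 | hA2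
  · have hcard : #A = 1 := by have := hA.card_pos; omega
    have ht1 : t = {A} := eq_singleton_iff_unique_mem.mpr ⟨ht.root_mem hA, fun D hD =>
      eq_of_subset_of_card_le (ht.subset_of_mem hD) (hcard ▸ (ht.nonempty_of_mem hD).card_pos)⟩
    rw [ht1, sum_singleton, fordWeight, if_neg (by omega), hcard]
    push_cast
    ring
  obtain ⟨B, C, hB, hBC, hBCA⟩ := ht.exists_isSibling_union_eq hA2
  have hBA : B ⊂ A := hBCA ▸ ht.ssubset_union_of_isSibling hBC
  have hCA : C ⊂ A :=
    hBCA ▸ union_comm C B ▸ ht.ssubset_union_of_isSibling (isSibling_symm hB hBC)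
  rw [ht.sum_eq_add_sum_subtree hB hBC hBCA, ih B hBA (ht.subtree hB) (ht.nonempty_of_mem hB),
    ih C hCA (ht.subtree hBC.1) (ht.nonempty_of_mem hBC.1), fordWeight, if_pos hA2, ← hBCA,
    card_union_of_disjoint (disjoint_iff_inter_eq_empty.mpr hBC.2.1)]
  push_cast
  ring

end IsLTree

theorem isLTree_singleton (a : ℕ) : IsLTree {a} {{a}} :=
  ⟨by simp, by simp, by simp, fun _ hB hne => absurd (mem_singleton.mp hB) hne⟩

theorem IsLTree.eq_filter_powerset {A : Finset ℕ} {t : Finset (Finset ℕ)} (ht : IsLTree A t)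
    (hA : #A ≤ 2) : t = A.powerset.filter (·.Nonempty) := by
  ext B
  simp only [mem_filter, mem_powerset]
  refine ⟨fun hB => ⟨ht.subset_of_mem hB, ht.nonempty_of_mem hB⟩, fun ⟨hBA, hB⟩ => ?_⟩
  rcases (by have := card_le_card hBA; have := hB.card_pos; omega : #B = 1 ∨ #B = #A) with h | h
  · obtain ⟨b, rfl⟩ := card_eq_one.mp h
    exact ht.singleton_mem (hBA (mem_singleton_self b))
  · rw [eq_of_subset_of_card_le hBA h.ge]
    exact ht.root_mem (hB.mono hBA)

/-- The edge of `insertLeaf t S j` corresponding to the edge `B` of `t`. -/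
def liftEdge (S : Finset ℕ) (j : ℕ) (B : Finset ℕ) : Finset ℕ :=
  if S ⊆ B then B ∪ {j} else B

section insertLeaf

variable {A : Finset ℕ} {t : Finset (Finset ℕ)} {S B C X : Finset ℕ} {j : ℕ}

theorem mem_liftEdge {x : ℕ} : x ∈ liftEdge S j B ↔ x ∈ B ∨ x = j ∧ S ⊆ B := by
  unfold liftEdge
  split_ifs with h <;> simp [h, or_comm]

theorem subset_liftEdge : B ⊆ liftEdge S j B := fun _ hx => mem_liftEdge.mpr (Or.inl hx)

theorem liftEdge_of_not_subset (h : ¬S ⊆ B) : liftEdge S j B = B := if_neg h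

theorem liftEdge_singleton {a : ℕ} (hS : S.Nonempty) (hSa : S ≠ {a}) : liftEdge S j {a} = {a} :=
  liftEdge_of_not_subset fun h => hSa ((subset_singleton_iff.mp h).resolve_left hS.ne_empty)

theorem liftEdge_self : liftEdge S j S = S ∪ {j} := if_pos subset_rfl

theorem not_subset_of_inter_eq_empty (hS : S.Nonempty) (h : B ∩ S = ∅) : ¬S ⊆ B := by
  obtain ⟨s, hs⟩ := hS
  exact fun hSB => by simpa [h] using mem_inter_of_mem (hSB hs) hs

theorem liftEdge_inter_liftEdge (hS : S.Nonempty) (hjB : j ∉ B) (hjC : j ∉ C)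
    (h : B ∩ C = ∅) :
    liftEdge S j B ∩ liftEdge S j C = ∅ := by
  obtain ⟨s, hs⟩ := hS
  ext x
  simp only [mem_inter, mem_liftEdge, notMem_empty, iff_false, not_and]
  simp only [Finset.ext_iff, mem_inter, notMem_empty, iff_false, not_and] at h
  rintro (hxB | ⟨rfl, hSB⟩) (hxC | ⟨hxj, hSC⟩)
  exacts [h x hxB hxC, hjB (hxj ▸ hxB), hjC hxC, h s (hSB hs) (hSC hs)]

theorem liftEdge_subset_liftEdge (h : B ⊆ C) : liftEdge S j B ⊆ liftEdge S j C := fun x => by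
  simp only [mem_liftEdge]
  exact Or.imp (@h x) (And.imp_right h.trans')

theorem liftEdge_eq_insert_iff (hSA : S ⊆ A) (hBA : B ⊆ A) (hj : j ∉ A) :
    liftEdge S j B = insert j A ↔ B = A := by
  unfold liftEdge
  split_ifs with hSB
  · rw [union_comm, ← insert_eq]
    refine ⟨fun h => ?_, fun h => h ▸ rfl⟩
    have := congrArg (erase · j) h
    rwa [erase_insert fun h => hj (hBA h), erase_insert hj] at this
  · exact ⟨fun h => absurd (h ▸ mem_insert_self j A) (fun h' => hj (hBA h')),
      fun h => absurd (h ▸ hSA) hSB⟩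

theorem minLbl_liftEdge (hS : S.Nonempty) (hB : ∀ x ∈ B, x < j) :
    minLbl (liftEdge S j B) = minLbl B := by
  unfold liftEdge
  split_ifs with hSB
  · have hBne : B.Nonempty := hS.mono hSB
    rw [union_comm, ← insert_eq, minLbl, minLbl, dif_pos hBne, dif_pos (insert_nonempty j B),
      min'_insert j B hBne, min_eq_right (hB _ (B.min'_mem hBne)).le]
  · rfl


theorem mem_insertLeaf (ht : IsLTree A t) (hS : S ∈ t) :
    X ∈ insertLeaf t S j ↔ X = {j} ∨ X = S ∨ ∃ B ∈ t, liftEdge S j B = X := by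
  have hSne := ht.nonempty_of_mem hS
  simp only [insertLeaf, mem_union, mem_filter, mem_image, mem_singleton]
  constructor
  · rintro (((⟨hX, hXS⟩ | ⟨hX, hXS⟩) | ⟨B, ⟨hB, hSB⟩, rfl⟩) | rfl)
    · exact Or.inr (Or.inr ⟨X, hX,
        liftEdge_of_not_subset (not_subset_of_inter_eq_empty hSne hXS)⟩)
    · by_cases hSX : S ⊆ X
      · exact Or.inr (Or.inl (Subset.antisymm hXS hSX))
      · exact Or.inr (Or.inr ⟨X, hX, liftEdge_of_not_subset hSX⟩)
    · exact Or.inr (Or.inr ⟨B, hB, if_pos hSB⟩)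
    · exact Or.inl rfl
  · rintro (rfl | rfl | ⟨B, hB, rfl⟩)
    · exact Or.inr rfl
    · exact Or.inl (Or.inl (Or.inr ⟨hS, subset_rfl⟩))
    · unfold liftEdge
      split_ifs with hSB
      · exact Or.inl (Or.inr ⟨B, ⟨hB, hSB⟩, rfl⟩)
      · exact Or.inl (Or.inl ((ht.2.2.1 B hB S hS).imp (⟨hB, ·⟩)
          fun h => ⟨hB, h.resolve_right hSB⟩))

theorem liftEdge_mem_insertLeaf (ht : IsLTree A t) (hS : S ∈ t) (hB : B ∈ t) :
    liftEdge S j B ∈ insertLeaf t S j :=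
  (mem_insertLeaf ht hS).mpr (Or.inr (Or.inr ⟨B, hB, rfl⟩))

theorem insertLeaf_laminar (ht : IsLTree A t) (hS : S ∈ t) (hj : j ∉ A) :
    ∀ X ∈ insertLeaf t S j, ∀ Y ∈ insertLeaf t S j,
      X ∩ Y = ∅ ∨ X ⊆ Y ∨ Y ⊆ X := by
  have symm : ∀ {X Y : Finset ℕ},
      X ∩ Y = ∅ ∨ X ⊆ Y ∨ Y ⊆ X → Y ∩ X = ∅ ∨ Y ⊆ X ∨ X ⊆ Y :=
    fun h => h.imp (fun h => by rwa [inter_comm]) Or.symm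
  have hj_lam : ∀ Y : Finset ℕ, {j} ∩ Y = ∅ ∨ {j} ⊆ Y ∨ Y ⊆ {j} := fun Y => by
    by_cases h : j ∈ Y
    · exact Or.inr (Or.inl (singleton_subset_iff.mpr h))
    · exact Or.inl (singleton_inter_of_notMem h)
  have hS_lam : ∀ {B}, B ∈ t →
      S ∩ liftEdge S j B = ∅ ∨ S ⊆ liftEdge S j B ∨ liftEdge S j B ⊆ S := by
    intro B hB
    by_cases hSB : S ⊆ B
    · exact Or.inr (Or.inl (hSB.trans subset_liftEdge))
    · rw [liftEdge_of_not_subset hSB]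
      exact ht.2.2.1 S hS B hB
  have hlift_lam : ∀ {B C}, B ∈ t → C ∈ t → liftEdge S j B ∩ liftEdge S j C = ∅ ∨
      liftEdge S j B ⊆ liftEdge S j C ∨ liftEdge S j C ⊆ liftEdge S j B := fun {B C} hB hC =>
    (ht.2.2.1 B hB C hC).imp (liftEdge_inter_liftEdge (ht.nonempty_of_mem hS)
      (fun h => hj (ht.subset_of_mem hB h)) (fun h => hj (ht.subset_of_mem hC h)))
      (Or.imp liftEdge_subset_liftEdge liftEdge_subset_liftEdge)
  intro X hX Y hY
  rcases (mem_insertLeaf ht hS).mp hX with rfl | rfl | ⟨B, hB, rfl⟩ <;>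
    rcases (mem_insertLeaf ht hS).mp hY with rfl | rfl | ⟨C, hC, rfl⟩
  · exact hj_lam _
  · exact hj_lam _
  · exact hj_lam _
  · exact symm (hj_lam _)
  · exact Or.inr (Or.inl subset_rfl)
  · exact hS_lam hC
  · exact symm (hj_lam _)
  · exact symm (hS_lam hB)
  · exact hlift_lam hB hC

theorem liftEdge_union_liftEdge (ht : IsLTree A t) (hS : S ∈ t) (hB : B ∈ t) (hC : C ∈ t)
    (hBC : B ∩ C = ∅) (hne : B ∪ C ≠ S) :
    liftEdge S j B ∪ liftEdge S j C = liftEdge S j (B ∪ C) := by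
  have hSne := ht.nonempty_of_mem hS
  unfold liftEdge
  by_cases hSB : S ⊆ B
  · have hSC : ¬S ⊆ C := fun hSC => (hSne.mono (subset_inter hSB hSC)).ne_empty hBC
    rw [if_pos hSB, if_neg hSC, if_pos (hSB.trans subset_union_left), union_right_comm]
  by_cases hSC : S ⊆ C
  · rw [if_neg hSB, if_pos hSC, if_pos (hSC.trans subset_union_right), union_assoc]
  -- if `S` lay below `B ∪ C` but below neither part, laminarity would force `S = B ∪ C`
  have below : ∀ {X Y}, X ∈ t → S ⊆ X ∪ Y → ¬S ⊆ X → ¬S ⊆ Y → X ⊆ S := by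
    intro X Y hX hSXY hSX hSY
    obtain ⟨x, hxS, hxY⟩ := not_subset.mp hSY
    have hxX := (mem_union.mp (hSXY hxS)).resolve_right hxY
    exact (ht.subset_or_subset hS hX hxS hxX).resolve_left hSX
  have hSBC : ¬S ⊆ B ∪ C := fun h => hne (Subset.antisymm
    (union_subset (below hB h hSB hSC) (below hC (union_comm B C ▸ h) hSC hSB)) h)
  rw [if_neg hSB, if_neg hSC, if_neg hSBC]

theorem isSibling_liftEdge (ht : IsLTree A t) (hS : S ∈ t) (hj : j ∉ A) (hB : B ∈ t)
    (h : IsSibling t B C) :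
    IsSibling (insertLeaf t S j) (liftEdge S j B) (liftEdge S j C) := by
  refine ⟨liftEdge_mem_insertLeaf ht hS h.1, liftEdge_inter_liftEdge (ht.nonempty_of_mem hS)
    (fun h' => hj (ht.subset_of_mem hB h')) (fun h' => hj (ht.subset_of_mem h.1 h')) h.2.1, ?_⟩
  by_cases hne : B ∪ C = S
  · have hSB : ¬S ⊆ B := fun hSB => (ht.ssubset_union_of_isSibling h).2 (hne ▸ hSB)
    have hSC : ¬S ⊆ C := fun hSC =>
      (ht.ssubset_union_of_isSibling (IsLTree.isSibling_symm hB h)).2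
        (union_comm B C ▸ hne ▸ hSC)
    rw [liftEdge_of_not_subset hSB, liftEdge_of_not_subset hSC, hne]
    exact (mem_insertLeaf ht hS).mpr (Or.inr (Or.inl rfl))
  · rw [liftEdge_union_liftEdge ht hS hB h.1 h.2.1 hne]
    exact liftEdge_mem_insertLeaf ht hS h.2.2

theorem insertLeaf_isLTree (ht : IsLTree A t) (hS : S ∈ t) (hj : j ∉ A) :
    IsLTree (insert j A) (insertLeaf t S j) := by
  have hSne := ht.nonempty_of_mem hS
  have hjS : j ∉ S := fun h => hj (ht.subset_of_mem hS h)
  have hmem := fun {X} => mem_insertLeaf (X := X) (j := j) ht hS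
  have hliftS : S ∪ {j} ∈ insertLeaf t S j := liftEdge_self ▸ liftEdge_mem_insertLeaf ht hS hS
  refine IsLTree.of_exists_isSibling (fun X hX => ?_) (fun i hi => ?_)
    (insertLeaf_laminar ht hS hj) (fun X hX hXA => ?_)
  · rcases hmem.mp hX with rfl | rfl | ⟨B, hB, rfl⟩
    · exact ⟨singleton_subset_iff.mpr (mem_insert_self j A), singleton_nonempty j⟩
    · exact ⟨(ht.subset_of_mem hS).trans (subset_insert j A), hSne⟩
    · refine ⟨fun x hx => ?_, (ht.nonempty_of_mem hB).mono subset_liftEdge⟩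
      rcases mem_liftEdge.mp hx with hxB | ⟨rfl, -⟩
      exacts [mem_insert_of_mem (ht.subset_of_mem hB hxB), mem_insert_self x A]
  · rcases mem_insert.mp hi with rfl | hiA
    · exact hmem.mpr (Or.inl rfl)
    by_cases hSi : S = {i}
    · exact hmem.mpr (Or.inr (Or.inl hSi.symm))
    · exact hmem.mpr (Or.inr (Or.inr ⟨{i}, ht.singleton_mem hiA, liftEdge_singleton hSne hSi⟩))
  · rcases hmem.mp hX with rfl | rfl | ⟨B, hB, rfl⟩
    · exact ⟨S, hmem.mpr (Or.inr (Or.inl rfl)), singleton_inter_of_notMem hjS,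
        union_comm S {j} ▸ hliftS⟩
    · exact ⟨{j}, hmem.mpr (Or.inl rfl), inter_singleton_of_notMem hjS, hliftS⟩
    · have hBA : B ≠ A := fun h =>
        hXA ((liftEdge_eq_insert_iff (ht.subset_of_mem hS) (ht.subset_of_mem hB) hj).mpr h)
      exact ⟨_, isSibling_liftEdge ht hS hj hB (ht.isSibling_sibling hB hBA)⟩

end insertLeaf

theorem minLbl_singleton (j : ℕ) : minLbl {j} = j := by simp [minLbl]

theorem minLbl_le {B : Finset ℕ} {M : ℕ} (h : ∀ x ∈ B, x ≤ M) : minLbl B ≤ M := by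
  unfold minLbl
  split_ifs with hB
  exacts [h _ (B.min'_mem hB), Nat.zero_le M]

theorem IsLTree.tildeOf_le {A : Finset ℕ} {t : Finset (Finset ℕ)} (ht : IsLTree A t) {i M : ℕ}
    (hA : ∀ x ∈ A, x ≤ M) (hi : i ≤ M) : tildeOf A t i ≤ M := by
  have h : ∀ B, minLbl (sibling t B) ≤ M := fun B =>
    minLbl_le fun x hx => hA x (ht.sibling_subset B hx)
  refine max_le hi (max_le (h _) ?_)
  split_ifs
  exacts [Nat.zero_le M, h _]

theorem IsLTree.tildeOf_self {A : Finset ℕ} {t : Finset (Finset ℕ)} (ht : IsLTree A t) {j : ℕ}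
    (hA : ∀ x ∈ A, x ≤ j) : tildeOf A t j = j :=
  le_antisymm (ht.tildeOf_le hA le_rfl) (le_max_left _ _)

section tildeOf

variable {A : Finset ℕ} {t : Finset (Finset ℕ)} {S B : Finset ℕ} {i j : ℕ}

theorem sibling_insertLeaf_self (ht : IsLTree A t) (hS : S ∈ t) (hj : j ∉ A) :
    sibling (insertLeaf t S j) S = {j} :=
  (insertLeaf_isLTree ht hS hj).sibling_eq ((mem_insertLeaf ht hS).mpr (Or.inr (Or.inl rfl)))
    ⟨(mem_insertLeaf ht hS).mpr (Or.inl rfl),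
      inter_singleton_of_notMem fun h => hj (ht.subset_of_mem hS h),
      liftEdge_self ▸ liftEdge_mem_insertLeaf ht hS hS⟩

theorem sibling_insertLeaf_liftEdge (ht : IsLTree A t) (hS : S ∈ t) (hj : j ∉ A) (hB : B ∈ t)
    (hBA : B ≠ A) :
    sibling (insertLeaf t S j) (liftEdge S j B) = liftEdge S j (sibling t B) :=
  (insertLeaf_isLTree ht hS hj).sibling_eq (liftEdge_mem_insertLeaf ht hS hB)
    (isSibling_liftEdge ht hS hj hB (ht.isSibling_sibling hB hBA))

theorem sibling_insertLeaf_singleton (ht : IsLTree A t) (hS : S ∈ t) (hj : j ∉ A) (hi : i ∈ A)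
    (hiA : ({i} : Finset ℕ) ≠ A) (hSi : S ≠ {i}) :
    sibling (insertLeaf t S j) {i} = liftEdge S j (sibling t {i}) := by
  have h := sibling_insertLeaf_liftEdge ht hS hj (ht.singleton_mem hi) hiA
  rwa [liftEdge_singleton (ht.nonempty_of_mem hS) hSi] at h

theorem tildeOf_insertLeaf_le (ht : IsLTree A t) (hS : S ∈ t) (hj : ∀ x ∈ A, x < j)
    (hi : i ∈ A) : tildeOf (insert j A) (insertLeaf t S j) i ≤ j :=
  (insertLeaf_isLTree ht hS fun h => lt_irrefl j (hj j h)).tildeOf_le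
    (fun x hx => (mem_insert.mp hx).elim le_of_eq fun hx => (hj x hx).le) (hj i hi).le

theorem tildeOf_insertLeaf_of_eq_singleton (ht : IsLTree A t) (hS : S ∈ t)
    (hj : ∀ x ∈ A, x < j) (hi : i ∈ A) (hSi : S = {i}) :
    tildeOf (insert j A) (insertLeaf t S j) i = j := by
  refine le_antisymm (tildeOf_insertLeaf_le ht hS hj hi) ?_
  rw [tildeOf, ← hSi, sibling_insertLeaf_self ht hS fun h => lt_irrefl j (hj j h),
    minLbl_singleton]
  exact le_max_of_le_right (le_max_left _ _)

theorem tildeOf_insertLeaf_of_eq_parentEdge (ht : IsLTree A t) (hS : S ∈ t)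
    (hj : ∀ x ∈ A, x < j) (hi : i ∈ A) (hiA : ({i} : Finset ℕ) ≠ A)
    (hSP : S = parentEdge t {i}) :
    tildeOf (insert j A) (insertLeaf t S j) i = j := by
  have hjA : j ∉ A := fun h => lt_irrefl j (hj j h)
  have hsib := ht.isSibling_sibling (ht.singleton_mem hi) hiA
  have hiS : i ∈ S := hSP ▸ mem_union_left _ (mem_singleton_self i)
  have hSC : ¬S ⊆ sibling t {i} := fun h =>
    (disjoint_singleton_left.mp (disjoint_iff_inter_eq_empty.mpr hsib.2.1)) (h hiS)
  have hpar_u : parentEdge (insertLeaf t S j) {i} = S := by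
    rw [parentEdge, sibling_insertLeaf_singleton ht hS hjA hi hiA
      (hSP ▸ (ht.ssubset_union_of_isSibling hsib).ne'), liftEdge_of_not_subset hSC, hSP,
      parentEdge]
  refine le_antisymm (tildeOf_insertLeaf_le ht hS hj hi) ?_
  rw [tildeOf, hpar_u,
    if_neg fun h : S = insert j A => hjA (ht.subset_of_mem hS (h ▸ mem_insert_self j A)),
    sibling_insertLeaf_self ht hS hjA, minLbl_singleton]
  exact le_max_of_le_right (le_max_right _ _)

theorem tildeOf_insertLeaf_of_ne (ht : IsLTree A t) (hS : S ∈ t) (hj : ∀ x ∈ A, x < j)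
    (hi : i ∈ A) (hiA : ({i} : Finset ℕ) ≠ A) (hSi : S ≠ {i})
    (hSP : S ≠ parentEdge t {i}) :
    tildeOf (insert j A) (insertLeaf t S j) i = tildeOf A t i := by
  have hjA : j ∉ A := fun h => lt_irrefl j (hj j h)
  have hsib := ht.isSibling_sibling (ht.singleton_mem hi) hiA
  have hPt : parentEdge t {i} ∈ t := hsib.2.2
  have hsib_u := sibling_insertLeaf_singleton ht hS hjA hi hiA hSi
  have hpar_u : parentEdge (insertLeaf t S j) {i} = liftEdge S j (parentEdge t {i}) := by
    rw [parentEdge, parentEdge, hsib_u, ← liftEdge_union_liftEdge ht hS (ht.singleton_mem hi)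
      hsib.1 hsib.2.1 (Ne.symm hSP), liftEdge_singleton (ht.nonempty_of_mem hS) hSi]
  have hmin : ∀ B, minLbl (liftEdge S j (sibling t B)) = minLbl (sibling t B) := fun B =>
    minLbl_liftEdge (ht.nonempty_of_mem hS) fun x hx => hj x (ht.sibling_subset B hx)
  rw [tildeOf, tildeOf, hsib_u, hpar_u, hmin]
  simp only [liftEdge_eq_insert_iff (ht.subset_of_mem hS) (ht.subset_of_mem hPt) hjA]
  split_ifs with hP
  · rfl
  · rw [sibling_insertLeaf_liftEdge ht hS hjA hPt hP, hmin]

theorem tildeOf_insertLeaf (ht : IsLTree A t) (hS : S ∈ t) (hj : ∀ x ∈ A, x < j)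
    (hA : 2 ≤ #A) (hi : i ∈ A) :
    tildeOf (insert j A) (insertLeaf t S j) i =
      if S = {i} ∨ S = parentEdge t {i} then j else tildeOf A t i := by
  have hiA : ({i} : Finset ℕ) ≠ A := fun h => by simp [← h] at hA
  split_ifs with h
  · exact h.elim (tildeOf_insertLeaf_of_eq_singleton ht hS hj hi)
      (tildeOf_insertLeaf_of_eq_parentEdge ht hS hj hi hiA)
  · exact tildeOf_insertLeaf_of_ne ht hS hj hi hiA (not_or.mp h).1 (not_or.mp h).2

end tildeOf

theorem mem_lbl {m x : ℕ} : x ∈ lbl m ↔ 1 ≤ x ∧ x ≤ m := mem_Icc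

theorem card_lbl (m : ℕ) : #(lbl m) = m := by simp [lbl]

theorem lbl_nonempty {m : ℕ} (hm : 1 ≤ m) : (lbl m).Nonempty :=
  ⟨1, mem_lbl.mpr ⟨le_rfl, hm⟩⟩

theorem lbl_succ (m : ℕ) : lbl (m + 1) = insert (m + 1) (lbl m) := by
  ext x
  simp only [mem_lbl, mem_insert]
  omega

theorem isLTree_lbl_two : IsLTree (lbl 2) (insertLeaf {{1}} {1} 2) :=
  lbl_succ 1 ▸ insertLeaf_isLTree (isLTree_singleton 1) (mem_singleton_self _) (by decide)

theorem sum_LTree_lbl_two (f : LTree (lbl 2) → ℝ) :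
    ∑ t : LTree (lbl 2), f t = f ⟨_, isLTree_lbl_two⟩ :=
  have : Subsingleton (LTree (lbl 2)) := ⟨fun t s => Subtype.ext <|
    (t.2.eq_filter_powerset (card_lbl 2).le).trans (s.2.eq_filter_powerset (card_lbl 2).le).symm⟩
  Fintype.sum_subsingleton f _

theorem tildeOf_lbl_two {i : ℕ} (hi : i ∈ lbl 2) :
    tildeOf (lbl 2) (insertLeaf {{1}} {1} 2) i = 2 := by
  rcases (by have := mem_lbl.mp hi; omega : i = 1 ∨ i = 2) with rfl | rfl
  · have h := tildeOf_insertLeaf_of_eq_singleton (j := 2) (isLTree_singleton 1)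
      (mem_singleton_self _) (by simp) (mem_singleton_self 1) rfl
    rwa [show insert 2 {1} = lbl 2 by decide] at h
  · exact isLTree_lbl_two.tildeOf_self fun x hx => (mem_lbl.mp hx).2

theorem sum_LTree_ite_eq {A : Finset ℕ} {u : Finset (Finset ℕ)} (hu : IsLTree A u)
    (f : Finset (Finset ℕ) → ℝ) : ∑ t : LTree A, (if t.1 = u then f t.1 else 0) = f u := by
  exact (Fintype.sum_eq_single (α := LTree A) ⟨u, hu⟩ fun t ht =>
    if_neg fun h => ht (Subtype.ext h)).trans (if_pos rfl)

theorem sum_growStepF_mul (α : ℝ) {m : ℕ} {s : Finset (Finset ℕ)} (hs : IsLTree (lbl m) s)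
    (g : Finset (Finset ℕ) → ℝ) :
    ∑ t : LTree (lbl (m + 1)), growStepF α m s t.1 * g t.1 =
      ∑ S ∈ s, fordWeight α S / (∑ S' ∈ s, fordWeight α S') *
        g (insertLeaf s S (m + 1)) := by
  simp only [growStepF, sum_mul, ite_mul, zero_mul]
  rw [sum_comm]
  refine sum_congr rfl fun S hS => ?_
  exact sum_LTree_ite_eq (lbl_succ m ▸ insertLeaf_isLTree hs hS (by simp [mem_lbl]))
    fun u => fordWeight α S / (∑ S' ∈ s, fordWeight α S') * g u

theorem qF_succ (α : ℝ) {m : ℕ} (hm : 2 ≤ m) (t : LTree (lbl (m + 1))) :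
    qF α (m + 1) t = ∑ s : LTree (lbl m), qF α m s * growStepF α m s.1 t.1 := by
  obtain ⟨k, rfl⟩ : ∃ k, m = k + 2 := ⟨m - 2, by omega⟩
  rfl

theorem sum_qF_succ_mul (α : ℝ) {m : ℕ} (hm : 2 ≤ m) (g : Finset (Finset ℕ) → ℝ) :
    ∑ t : LTree (lbl (m + 1)), qF α (m + 1) t * g t.1 =
      (m - α)⁻¹ * ∑ s : LTree (lbl m), qF α m s *
        ∑ S ∈ s.1, fordWeight α S * g (insertLeaf s.1 S (m + 1)) := by
  calc _ = ∑ s : LTree (lbl m), qF α m s *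
        ∑ t : LTree (lbl (m + 1)), growStepF α m s.1 t.1 * g t.1 := by
        simp only [qF_succ α hm, sum_mul, mul_sum, mul_assoc]
        exact sum_comm
    _ = _ := by
        rw [mul_sum]
        refine sum_congr rfl fun s _ => ?_
        rw [sum_growStepF_mul α s.2, s.2.sum_fordWeight α (lbl_nonempty (by omega)), card_lbl,
          mul_sum, mul_sum, mul_sum]
        exact sum_congr rfl fun S _ => by ring

theorem sum_qF (α : ℝ) (hα : α < 2) {m : ℕ} (hm : 2 ≤ m) :
    ∑ t : LTree (lbl m), qF α m t = 1 := by
  induction m, hm using Nat.le_induction with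
  | base => rw [sum_LTree_lbl_two]; rfl
  | succ m hm ih =>
    have hmα : (m : ℝ) - α ≠ 0 := by
      have : (2 : ℝ) ≤ m := by exact_mod_cast hm
      linarith
    have h := sum_qF_succ_mul α hm fun _ => 1
    simp only [mul_one] at h
    rw [h, sum_congr rfl fun s _ => by
        rw [s.2.sum_fordWeight α (lbl_nonempty (by omega)), card_lbl],
      ← sum_mul, ih, one_mul, inv_mul_cancel₀ hmα]

theorem IsLTree.sum_fordWeight_mul_ite (α : ℝ) {A : Finset ℕ} {t : Finset (Finset ℕ)}
    (ht : IsLTree A t) (hA : 2 ≤ #A) {i : ℕ} (hi : i ∈ A) (a b : ℝ) :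
    ∑ S ∈ t, fordWeight α S * (if S = {i} ∨ S = parentEdge t {i} then a else b) =
      (#A - α) * b + (a - b) := by
  have hiA : ({i} : Finset ℕ) ≠ A := fun h => by simp [← h] at hA
  have hsib := ht.isSibling_sibling (ht.singleton_mem hi) hiA
  have hiP : ({i} : Finset ℕ) ⊂ parentEdge t {i} := ht.ssubset_union_of_isSibling hsib
  have hPt : parentEdge t {i} ∈ t := hsib.2.2
  have hwi : fordWeight α {i} = 1 - α := if_neg (by simp)
  have hwP : fordWeight α (parentEdge t {i}) = α :=
    if_pos (by simpa [Nat.lt_iff_add_one_le] using card_lt_card hiP)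
  have hpt : ∀ S, fordWeight α S * (if S = {i} ∨ S = parentEdge t {i} then a else b) =
      fordWeight α S * b + ((if S = {i} then (1 - α) * (a - b) else 0) +
        (if S = parentEdge t {i} then α * (a - b) else 0)) := by
    intro S
    by_cases h1 : S = {i}
    · rw [if_pos (Or.inl h1), if_pos h1, if_neg (h1 ▸ hiP.ne), h1, hwi]
      ring
    by_cases h2 : S = parentEdge t {i}
    · rw [if_pos (Or.inr h2), if_neg h1, if_pos h2, h2, hwP]
      ring
    rw [if_neg (not_or.mpr ⟨h1, h2⟩), if_neg h1, if_neg h2]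
    ring
  rw [sum_congr rfl fun S _ => hpt S, sum_add_distrib, sum_add_distrib, ← sum_mul,
    ht.sum_fordWeight α ⟨i, hi⟩, sum_ite_eq', sum_ite_eq', if_pos (ht.singleton_mem hi),
    if_pos hPt]
  ring

noncomputable def tildeCount (A : Finset ℕ) (t : Finset (Finset ℕ)) (it : ℕ) : ℝ :=
  ∑ i ∈ A, if tildeOf A t i = it then 1 else 0

theorem IsLTree.sum_fordWeight_mul_tildeCount_insertLeaf (α : ℝ) {A : Finset ℕ}
    {t : Finset (Finset ℕ)} (ht : IsLTree A t) (hA : 2 ≤ #A) {j : ℕ} (hj : ∀ x ∈ A, x < j)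
    (it : ℕ) :
    ∑ S ∈ t, fordWeight α S * tildeCount (insert j A) (insertLeaf t S j) it =
      (2 * #A - α) * (if j = it then 1 else 0) + (#A - 1 - α) * tildeCount A t it := by
  have hjA : j ∉ A := fun h => lt_irrefl j (hj j h)
  have hcount : ∀ S ∈ t, tildeCount (insert j A) (insertLeaf t S j) it =
      (if j = it then 1 else 0) + ∑ i ∈ A, if S = {i} ∨ S = parentEdge t {i} then
        (if j = it then 1 else 0) else (if tildeOf A t i = it then 1 else 0) := by
    intro S hS
    rw [tildeCount, sum_insert hjA, (insertLeaf_isLTree ht hS hjA).tildeOf_self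
      fun x hx => (mem_insert.mp hx).elim le_of_eq fun hx => (hj x hx).le]
    refine congrArg _ (sum_congr rfl fun i hi => ?_)
    rw [tildeOf_insertLeaf ht hS hj hA hi]
    split_ifs <;> rfl
  rw [sum_congr rfl fun S hS => by rw [hcount S hS, mul_add, mul_sum], sum_add_distrib,
    ← sum_mul, ht.sum_fordWeight α (card_pos.mp (by omega)), sum_comm,
    sum_congr rfl fun i hi => ht.sum_fordWeight_mul_ite α hA hi _ _, sum_add_distrib,
    sum_sub_distrib, ← mul_sum, sum_const, nsmul_eq_mul, ← tildeCount]
  ring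

noncomputable def meanTildeCount (α : ℝ) (m it : ℕ) : ℝ :=
  ∑ t : LTree (lbl m), qF α m t * tildeCount (lbl m) t.1 it

theorem meanTildeCount_two (α : ℝ) (it : ℕ) :
    meanTildeCount α 2 it = 2 * if 2 = it then 1 else 0 := by
  rw [meanTildeCount, sum_LTree_lbl_two, tildeCount,
    sum_congr rfl fun i hi => by rw [tildeOf_lbl_two hi], sum_const, card_lbl, nsmul_eq_mul]
  exact one_mul _

theorem meanTildeCount_succ (α : ℝ) (hα : α < 2) {m : ℕ} (hm : 2 ≤ m) (it : ℕ) :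
    (m - α) * meanTildeCount α (m + 1) it =
      (2 * m - α) * (if m + 1 = it then 1 else 0) + (m - 1 - α) * meanTildeCount α m it := by
  have hmα : (m : ℝ) - α ≠ 0 := by
    have : (2 : ℝ) ≤ m := by exact_mod_cast hm
    linarith
  have hstep : ∀ s : LTree (lbl m), ∑ S ∈ s.1, fordWeight α S *
      tildeCount (lbl (m + 1)) (insertLeaf s.1 S (m + 1)) it =
      (2 * m - α) * (if m + 1 = it then 1 else 0) + (m - 1 - α) * tildeCount (lbl m) s.1 it := by
    intro s
    rw [lbl_succ, s.2.sum_fordWeight_mul_tildeCount_insertLeaf α (by rw [card_lbl]; exact hm)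
      (fun x hx => Nat.lt_succ_of_le (mem_lbl.mp hx).2), card_lbl]
  have h := sum_qF_succ_mul α hm fun u => tildeCount (lbl (m + 1)) u it
  rw [meanTildeCount, h, mul_inv_cancel_left₀ hmα,
    sum_congr rfl fun s _ => by rw [hstep s], meanTildeCount]
  simp only [mul_add, sum_add_distrib, ← sum_mul, sum_qF α hα hm, one_mul, mul_sum]
  exact congrArg _ (sum_congr rfl fun s _ => by ring)

theorem meanTildeCount_eq (α : ℝ) (hα : α < 2) {m it : ℕ} (hm : 2 ≤ m) (hit : 2 ≤ it) :
    (m - 1 - α) * meanTildeCount α m it =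
      if it = 2 then 2 * (1 - α) else if it ≤ m then 2 * it - 2 - α else 0 := by
  induction m, hm using Nat.le_induction with
  | base =>
    rw [meanTildeCount_two]
    rcases eq_or_ne it 2 with rfl | h2
    · norm_num
      ring
    · rw [if_neg (Ne.symm h2), if_neg h2, if_neg (by omega)]
      ring
  | succ m hm ih =>
    rw [Nat.cast_add_one, show (m : ℝ) + 1 - 1 - α = m - α by ring,
      meanTildeCount_succ α hα hm, ih]
    rcases lt_trichotomy it (m + 1) with h | rfl | h
    · rw [if_neg h.ne', mul_zero, zero_add]
      split_ifs <;> first | rfl | (exfalso; omega)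
    · simp only [if_pos le_rfl, if_neg (show m + 1 ≠ 2 by omega),
        if_neg (show ¬m + 1 ≤ m by omega)]
      push_cast
      ring
    · simp only [if_neg h.ne, if_neg (show it ≠ 2 by omega), if_neg (show ¬it ≤ m by omega),
        if_neg (show ¬it ≤ m + 1 by omega)]
      ring

theorem prob_tildeOf_eq (α : ℝ) (hα : α < 1) {n it : ℕ} (hit : 2 ≤ it) (hn : it ≤ n) :
    (1 / (n : ℝ)) * ∑ i ∈ lbl n, ∑ t : LTree (lbl n),
        qF α n t * (if tildeOf (lbl n) t.1 i = it then 1 else 0) =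
      (if it = 2 then 2 * (1 - α) else 2 * it - 2 - α) / (n * (n - 1 - α)) := by
  have hnα : (n : ℝ) - 1 - α ≠ 0 := by
    have : (2 : ℝ) ≤ n := by exact_mod_cast hit.trans hn
    linarith
  have hmean := meanTildeCount_eq α (by linarith) (hit.trans hn) hit
  rw [if_pos hn] at hmean
  have hsum : ∑ i ∈ lbl n, ∑ t : LTree (lbl n),
      qF α n t * (if tildeOf (lbl n) t.1 i = it then 1 else 0) = meanTildeCount α n it := by
    rw [meanTildeCount, sum_comm]
    simp only [tildeCount, mul_sum]
  rw [hsum, ← hmean]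
  field_simp

theorem cor_resampdist_general (n : ℕ) (hn : 3 ≤ n) (α : ℝ) (hα1 : α < 1) :
    (∀ it : ℕ, 3 ≤ it → it ≤ n →
      (1 / (n : ℝ)) * ∑ i ∈ lbl n, ∑ t : LTree (lbl n),
          qF α n t * (if tildeOf (lbl n) t.1 i = it then 1 else 0)
        = (2 * (it : ℝ) - 2 - α) / ((n : ℝ) * ((n : ℝ) - 1 - α))) ∧
    ((1 / (n : ℝ)) * ∑ i ∈ lbl n, ∑ t : LTree (lbl n),
          qF α n t * (if tildeOf (lbl n) t.1 i = 2 then 1 else 0)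
        = 2 * (1 - α) / ((n : ℝ) * ((n : ℝ) - 1 - α))) ∧
    (∀ it : ℕ, 3 ≤ it → it ≤ n →
      (1 / (n : ℝ)) * ∑ i ∈ lbl n, ∑ t : LTree (lbl n),
          qF (1 / 2) n t * (if tildeOf (lbl n) t.1 i = it then 1 else 0)
        = (4 * (it : ℝ) - 5) / ((n : ℝ) * (2 * (n : ℝ) - 3))) ∧
    ((1 / (n : ℝ)) * ∑ i ∈ lbl n, ∑ t : LTree (lbl n),
          qF (1 / 2) n t * (if tildeOf (lbl n) t.1 i = 2 then 1 else 0)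
        = 2 / ((n : ℝ) * (2 * (n : ℝ) - 3))) := by
  have hn3 : (3 : ℝ) ≤ n := by exact_mod_cast hn
  have hhalf : (n : ℝ) - 1 - 1 / 2 = (2 * n - 3) / 2 := by ring
  refine ⟨fun it h3 hle => ?_, ?_, fun it h3 hle => ?_, ?_⟩
  · rw [prob_tildeOf_eq α hα1 (by omega) hle, if_neg (by omega)]
  · rw [prob_tildeOf_eq α hα1 le_rfl (by omega), if_pos rfl]
  · rw [prob_tildeOf_eq (1 / 2) (by norm_num) (by omega) hle, if_neg (by omega), hhalf]
    field_simp
    ring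
  · rw [prob_tildeOf_eq (1 / 2) (by norm_num) le_rfl (by omega), if_pos rfl, hhalf]
    field_simp
    ring

/-- **Corollary 2.7.** The distribution of the label `Ĩ` removed in the down-move of
the alpha chain started from `T_n ~ q_{n,α}` with an independent uniform leaf choice,
together with its specialization at `α = 1/2`. -/
theorem cor_resampdist (n : ℕ) (hn : 3 ≤ n) (α : ℝ) (hα0 : 0 < α) (hα1 : α < 1) :
    (∀ it : ℕ, 3 ≤ it → it ≤ n →
      (1 / (n : ℝ)) * ∑ i ∈ lbl n, ∑ t : LTree (lbl n),
          qF α n t * (if tildeOf (lbl n) t.1 i = it then 1 else 0)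
        = (2 * (it : ℝ) - 2 - α) / ((n : ℝ) * ((n : ℝ) - 1 - α))) ∧
    ((1 / (n : ℝ)) * ∑ i ∈ lbl n, ∑ t : LTree (lbl n),
          qF α n t * (if tildeOf (lbl n) t.1 i = 2 then 1 else 0)
        = 2 * (1 - α) / ((n : ℝ) * ((n : ℝ) - 1 - α))) ∧
    (∀ it : ℕ, 3 ≤ it → it ≤ n →
      (1 / (n : ℝ)) * ∑ i ∈ lbl n, ∑ t : LTree (lbl n),
          qF (1 / 2) n t * (if tildeOf (lbl n) t.1 i = it then 1 else 0)
        = (4 * (it : ℝ) - 5) / ((n : ℝ) * (2 * (n : ℝ) - 3))) ∧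
    ((1 / (n : ℝ)) * ∑ i ∈ lbl n, ∑ t : LTree (lbl n),
          qF (1 / 2) n t * (if tildeOf (lbl n) t.1 i = 2 then 1 else 0)
        = 2 / ((n : ℝ) * (2 * (n : ℝ) - 3))) :=
  cor_resampdist_general n hn α hα1
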